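/- arXiv:1704.06401 — 8 statements merged into one kernel-verified Lean document; each statement's English description precedes it below -/
import Mathlib

section
/- Let u, v : ℝ → ℝ be differentiable functions satisfying the system u'(s) = 2 u(s) v(s) and v'(s) = (v(s))² − (u(s))² + 1 for all s ∈ ℝ. Then u(s) ≠ 0 for every s ∈ ℝ. -/
/-!
If `u` vanished somewhere, the integrating factor `exp (-∫ 2v)` would force `u ≡ 0`, and then
`v' = v² + 1`. But then `arctan ∘ v` grows with slope exactly `1`, which is impossible for a
function bounded by `π / 2` in absolute value.
-/

open Real

theorem eq_mul_exp_integral_of_hasDerivAt {a u : ℝ → ℝ} (ha : Continuous a)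
    (hu : ∀ t, HasDerivAt u (a t * u t) t) (t₀ t : ℝ) :
    u t = u t₀ * exp (∫ s in t₀..t, a s) := by
  set A : ℝ → ℝ := fun t ↦ ∫ s in t₀..t, a s
  have hA : ∀ t, HasDerivAt A (a t) t := fun t ↦ (ha.integral_hasStrictDerivAt t₀ t).hasDerivAt
  have hderiv : ∀ t, HasDerivAt (fun t ↦ u t * exp (-A t)) 0 t := fun t ↦ by
    refine ((hu t).mul (hA t).neg.exp).congr_deriv ?_
    simp only [Pi.neg_apply]
    ring
  have hconst := is_const_of_deriv_eq_zero (fun t ↦ (hderiv t).differentiableAt)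
    (fun t ↦ (hderiv t).deriv) t t₀
  simp only [A, intervalIntegral.integral_same, neg_zero, exp_zero, mul_one] at hconst
  rw [← hconst, mul_assoc, ← exp_add, neg_add_cancel, exp_zero, mul_one]

theorem not_forall_hasDerivAt_sq_add_one (v : ℝ → ℝ) :
    ¬ ∀ t, HasDerivAt v (v t ^ 2 + 1) t := by
  intro hv
  have hderiv : ∀ t, HasDerivAt (fun t ↦ arctan (v t) - t) 0 t := fun t ↦ by
    refine (((hasDerivAt_arctan (v t)).comp t (hv t)).sub (hasDerivAt_id t)).congr_deriv ?_
    field_simp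
    ring
  have hconst := is_const_of_deriv_eq_zero (fun t ↦ (hderiv t).differentiableAt)
    (fun t ↦ (hderiv t).deriv) π 0
  simp only [sub_zero] at hconst
  linarith [arctan_lt_pi_div_two (v π), neg_pi_div_two_lt_arctan (v 0)]

/-- If `u v : ℝ → ℝ` are differentiable and satisfy `u' = 2uv` and
`v' = v² − u² + 1` on all of `ℝ`, then `u` vanishes nowhere. -/
theorem stmt_1 (u v : ℝ → ℝ) (hu : Differentiable ℝ u) (hv : Differentiable ℝ v)
    (hu' : ∀ s : ℝ, deriv u s = 2 * u s * v s)
    (hv' : ∀ s : ℝ, deriv v s = (v s) ^ 2 - (u s) ^ 2 + 1) :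
    ∀ s : ℝ, u s ≠ 0 := by
  intro s₀ hs₀
  have hu_linear : ∀ t, HasDerivAt u (2 * v t * u t) t := fun t ↦ by
    simpa only [hu' t, mul_right_comm] using (hu t).hasDerivAt
  have hu_zero : ∀ t, u t = 0 := fun t ↦ by
    rw [eq_mul_exp_integral_of_hasDerivAt (continuous_const.mul hv.continuous) hu_linear s₀ t,
      hs₀, zero_mul]
  refine not_forall_hasDerivAt_sq_add_one v fun t ↦ ?_
  simpa only [hv' t, hu_zero t, sub_zero, ne_eq, OfNat.ofNat_ne_zero, not_false_eq_true,
    zero_pow] using (hv t).hasDerivAt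
end

section
/- Let n ≥ 1 and let C : ℝ → Matrix (Fin n) (Fin n) ℝ be a differentiable map (derivative taken in the normed space of n×n real matrices) satisfying C'(s) = (C(s))² + 1 for all s ∈ ℝ, where 1 denotes the identity matrix and (C(s))² the matrix square. Then for every s ∈ ℝ and every real number λ, the matrix C(s) − λ·1 is invertible; that is, C(s) has no real eigenvalue. -/
attribute [local instance] Matrix.normedAddCommGroup Matrix.normedSpace

open Real Matrix

/-! If `C 0 *ᵥ v = λ • v` with `v ≠ 0`, then
`y t = (cos t - λ sin t) • C t *ᵥ v - (sin t + λ cos t) • v` solves the linear equation `y' = C y`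
with `y 0 = 0`: it compares `C t` on `v` with the explicit solution
`(sin t + cos t C₀)(cos t - sin t C₀)⁻¹`. By Grönwall `y ≡ 0` on `[0, ∞)`, but at
`t = π / 2 - arctan λ` the first coefficient vanishes while the second does not. -/

namespace Matrix

variable {𝕜 : Type*} [NontriviallyNormedField 𝕜] [CompleteSpace 𝕜] {m n : Type*} [Fintype m]
  [Fintype n]

variable (𝕜 m n) in
noncomputable def mulVecCLM : Matrix m n 𝕜 →L[𝕜] (n → 𝕜) →L[𝕜] (m → 𝕜) :=
  LinearMap.toContinuousLinearMap
    (LinearMap.toContinuousLinearMap.toLinearMap ∘ₗ mulVecBilin 𝕜 𝕜)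

theorem _root_.HasDerivAt.mulVec_const {M : 𝕜 → Matrix m n 𝕜} {M' : Matrix m n 𝕜} {t : 𝕜}
    (hM : HasDerivAt M M' t) (v : n → 𝕜) : HasDerivAt (fun t ↦ M t *ᵥ v) (M' *ᵥ v) t := by
  have := ((mulVecCLM 𝕜 m n).hasFDerivAt.comp_hasDerivAt t hM).clm_apply (hasDerivAt_const t v)
  simp only [map_zero, add_zero] at this
  exact this

end Matrix

theorem eq_zero_of_hasDerivAt_clm_apply {E : Type*} [NormedAddCommGroup E] [NormedSpace ℝ E]
    {A : ℝ → E →L[ℝ] E} (hA : Continuous A) {y : ℝ → E} (hy : ∀ t, HasDerivAt y (A t (y t)) t)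
    {a b : ℝ} (ha : y a = 0) (hab : a ≤ b) : y b = 0 := by
  obtain ⟨K, hK⟩ := isCompact_Icc.exists_bound_of_continuousOn (s := Set.Icc a b) hA.continuousOn
  refine eq_zero_of_abs_deriv_le_mul_abs_self_of_eq_zero_right
    (fun t _ ↦ (hy t).continuousAt.continuousWithinAt) (fun t _ ↦ (hy t).hasDerivWithinAt) ha
    (fun t ht ↦ (A t).le_of_opNorm_le (hK t (Set.Ico_subset_Icc_self ht)) _) b ⟨hab, le_rfl⟩

theorem exists_cos_eq_mul_sin (lam : ℝ) : ∃ t, 0 ≤ t ∧ cos t = lam * sin t ∧ 0 < sin t := by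
  refine ⟨π / 2 - arctan lam, by linarith [arctan_lt_pi_div_two lam], ?_, ?_⟩
  · rw [cos_pi_div_two_sub, sin_pi_div_two_sub, sin_arctan, cos_arctan]
    ring
  · rw [sin_pi_div_two_sub]
    exact cos_arctan_pos lam

section Riccati

variable {ι : Type*} [Fintype ι] [DecidableEq ι]

noncomputable def riccatiDefect (C : ℝ → Matrix ι ι ℝ) (lam : ℝ) (v : ι → ℝ) (t : ℝ) : ι → ℝ :=
  (cos t - lam * sin t) • (C t *ᵥ v) - (sin t + lam * cos t) • v

variable {C : ℝ → Matrix ι ι ℝ}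

theorem hasDerivAt_riccatiDefect (hC : ∀ t, HasDerivAt C (C t ^ 2 + 1) t) (lam : ℝ)
    (v : ι → ℝ) (t : ℝ) :
    HasDerivAt (riccatiDefect C lam v) (C t *ᵥ riccatiDefect C lam v t) t := by
  have hf : HasDerivAt (fun t ↦ cos t - lam * sin t) (-(sin t + lam * cos t)) t :=
    ((hasDerivAt_cos t).sub ((hasDerivAt_sin t).const_mul lam)).congr_deriv (by ring)
  have hg : HasDerivAt (fun t ↦ sin t + lam * cos t) (cos t - lam * sin t) t :=
    ((hasDerivAt_sin t).add ((hasDerivAt_cos t).const_mul lam)).congr_deriv (by ring)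
  refine ((hf.smul ((hC t).mulVec_const v)).sub (hg.smul_const v)).congr_deriv ?_
  simp only [riccatiDefect, mulVec_sub, mulVec_smul, add_mulVec, one_mulVec, sq, ← mulVec_mulVec]
  module

theorem riccatiDefect_eq_zero (hC : ∀ t, HasDerivAt C (C t ^ 2 + 1) t) {lam : ℝ} {v : ι → ℝ}
    (hv : C 0 *ᵥ v = lam • v) {t : ℝ} (ht : 0 ≤ t) : riccatiDefect C lam v t = 0 := by
  have hA : Continuous fun t ↦ mulVecCLM ℝ ι ι (C t) :=
    (mulVecCLM ℝ ι ι).continuous.comp (continuous_iff_continuousAt.2 fun t ↦ (hC t).continuousAt)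
  refine eq_zero_of_hasDerivAt_clm_apply hA (hasDerivAt_riccatiDefect hC lam v) ?_ ht
  simp [riccatiDefect, hv]

theorem mulVec_ne_smul_of_riccati (hC : ∀ t, HasDerivAt C (C t ^ 2 + 1) t) (lam : ℝ)
    {v : ι → ℝ} (hv : v ≠ 0) : C 0 *ᵥ v ≠ lam • v := by
  intro hCv
  obtain ⟨t, ht, hcos, hsin⟩ := exists_cos_eq_mul_sin lam
  have hzero := riccatiDefect_eq_zero hC hCv ht
  rw [riccatiDefect, hcos, sub_self, zero_smul, zero_sub, neg_eq_zero, smul_eq_zero] at hzero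
  have hcoef : sin t + lam * (lam * sin t) ≠ 0 := by nlinarith [sq_nonneg lam]
  exact hv (hzero.resolve_left hcoef)

theorem isUnit_sub_smul_one_of_riccati (hC : ∀ t, HasDerivAt C (C t ^ 2 + 1) t) (lam : ℝ) :
    IsUnit (C 0 - lam • (1 : Matrix ι ι ℝ)) := by
  rw [isUnit_iff_isUnit_det, isUnit_iff_ne_zero, Ne, ← exists_mulVec_eq_zero_iff.not]
  rintro ⟨v, hv, hCv⟩
  rw [sub_mulVec, smul_mulVec, one_mulVec, sub_eq_zero] at hCv
  exact mulVec_ne_smul_of_riccati hC lam hv hCv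

end Riccati

theorem stmt_3_general (n : ℕ) (C : ℝ → Matrix (Fin n) (Fin n) ℝ)
    (hC : Differentiable ℝ C)
    (hC' : ∀ s : ℝ, deriv C s = C s ^ 2 + 1) :
    ∀ (s lam : ℝ), IsUnit (C s - lam • (1 : Matrix (Fin n) (Fin n) ℝ)) := by
  intro s lam
  have hshift : ∀ t, HasDerivAt (fun t ↦ C (s + t)) (C (s + t) ^ 2 + 1) t := fun t ↦ by
    rw [← hC']
    exact (hC (s + t)).hasDerivAt.comp_const_add s t
  simpa using isUnit_sub_smul_one_of_riccati hshift lam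

/-- If `C : ℝ → Matrix (Fin n) (Fin n) ℝ` is differentiable and satisfies the
matrix Riccati equation `C' = C² + 1` on all of `ℝ`, then `C s` has no real
eigenvalue: `C s - λ • 1` is invertible for every `s` and every real `λ`. -/
theorem stmt_3 (n : ℕ) (hn : 1 ≤ n) (C : ℝ → Matrix (Fin n) (Fin n) ℝ)
    (hC : Differentiable ℝ C)
    (hC' : ∀ s : ℝ, deriv C s = C s ^ 2 + 1) :
    ∀ (s lam : ℝ), IsUnit (C s - lam • (1 : Matrix (Fin n) (Fin n) ℝ)) :=
  stmt_3_general n C hC hC'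
end

section
/- Let n ≥ 1 be an odd natural number. Then there is no differentiable map C : ℝ → Matrix (Fin n) (Fin n) ℝ satisfying C'(s) = (C(s))² + 1 for all s ∈ ℝ, where 1 denotes the identity matrix and (C(s))² the matrix square. -/
attribute [local instance] Matrix.normedAddCommGroup Matrix.normedSpace

/-!
Odd size forces `C 0` to have a real eigenvector `v`, say `C 0 *ᵥ v = μ • v`. Choose `θ > 0` with
`cot θ = μ`. Differentiating with `C' = C² + 1` shows that
`y t = cos (t - θ) • v + sin (t - θ) • (C t *ᵥ v)` solves the linear equation `y' = C y`.
Since `y 0 = (cos θ - μ sin θ) • v = 0`, Grönwall's inequality forces `y θ = 0`, but `y θ = v ≠ 0`.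
-/

open Polynomial Set Matrix

theorem Polynomial.exists_isRoot_of_odd_natDegree {P : ℝ[X]} (h : Odd P.natDegree) :
    ∃ x, P.IsRoot x := by
  -- Without roots, `P 0` would carry the sign of the leading coefficient, seen from `+∞`, and also
  -- that sign times `(-1) ^ natDegree`, seen from `-∞`.
  by_contra! hroots
  have below : ∀ y, P.IsRoot y → y < 0 := fun y hy => (hroots y hy).elim
  have above : ∀ y, P.IsRoot y → 0 < y := fun y hy => (hroots y hy).elim
  have hsign : Int.negOnePow P.natDegree = -1 := Int.negOnePow_odd _ (by exact_mod_cast h)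
  rcases le_total 0 P.leadingCoeff with hlc | hlc
  · have h₁ := zero_lt_negOnePow_mul_eval_of_lt_roots_of_leadingCoeff_nonneg above hlc
    rw [hsign] at h₁
    push_cast at h₁
    linarith [zero_lt_eval_of_roots_lt_of_leadingCoeff_nonneg below hlc]
  · have h₁ := negOnePow_mul_eval_lt_zero_of_lt_roots_of_leadingCoeff_nonpos above hlc
    rw [hsign] at h₁
    push_cast at h₁
    linarith [eval_lt_zero_of_roots_lt_of_leadingCoeff_nonpos below hlc]

theorem Matrix.exists_mulVec_eq_smul_of_odd_card {ι : Type*} [Fintype ι] [DecidableEq ι]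
    (A : Matrix ι ι ℝ) (h : Odd (Fintype.card ι)) : ∃ μ : ℝ, ∃ v ≠ 0, A *ᵥ v = μ • v := by
  obtain ⟨μ, hμ⟩ := A.charpoly.exists_isRoot_of_odd_natDegree (by rwa [A.charpoly_natDegree_eq_dim])
  rw [IsRoot, eval_charpoly] at hμ
  obtain ⟨v, hv, hAv⟩ := exists_mulVec_eq_zero_iff.mpr hμ
  refine ⟨μ, v, hv, ?_⟩
  rw [sub_mulVec, sub_eq_zero] at hAv
  rw [← hAv]
  ext i
  simp [mulVec_diagonal]

theorem Real.exists_pos_cos_eq_mul_sin (μ : ℝ) : ∃ θ > 0, Real.cos θ = μ * Real.sin θ := by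
  refine ⟨Real.pi / 2 - Real.arctan μ, by linarith [Real.arctan_lt_pi_div_two μ], ?_⟩
  rw [Real.cos_pi_div_two_sub, Real.sin_pi_div_two_sub, Real.sin_arctan, Real.cos_arctan]
  field_simp

noncomputable def Matrix.mulVecCLM_s4 (m n : Type*) [Fintype m] [Fintype n] :
    Matrix m n ℝ →L[ℝ] (n → ℝ) →L[ℝ] (m → ℝ) :=
  LinearMap.toContinuousLinearMap <| LinearMap.toContinuousLinearMap.toLinearMap ∘ₗ
    LinearMap.mk₂ ℝ (· *ᵥ ·) add_mulVec smul_mulVec mulVec_add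
      fun c A x => mulVec_smul A c x

@[simp]
theorem Matrix.mulVecCLM_apply {m n : Type*} [Fintype m] [Fintype n] (A : Matrix m n ℝ)
    (x : n → ℝ) : mulVecCLM_s4 m n A x = A *ᵥ x := rfl

theorem Matrix.exists_bound_mulVec_of_continuousOn {m n : Type*} [Fintype m] [Fintype n]
    {A : ℝ → Matrix m n ℝ} {s : Set ℝ} (hs : IsCompact s) (hA : ContinuousOn A s) :
    ∃ K, ∀ t ∈ s, ∀ x, ‖A t *ᵥ x‖ ≤ K * ‖x‖ := by
  obtain ⟨K, hK⟩ :=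
    hs.exists_bound_of_continuousOn ((mulVecCLM_s4 m n).continuous.comp_continuousOn hA)
  exact ⟨K, fun t ht x => ((mulVecCLM_s4 m n (A t)).le_opNorm x).trans
    (mul_le_mul_of_nonneg_right (hK t ht) (norm_nonneg x))⟩

theorem eq_zero_of_hasDerivWithinAt_mulVec {ι : Type*} [Fintype ι]
    {A : ℝ → Matrix ι ι ℝ} {y : ℝ → ι → ℝ} {a b : ℝ} (hA : ContinuousOn A (Icc a b))
    (hy : ContinuousOn y (Icc a b))
    (hy' : ∀ t ∈ Ico a b, HasDerivWithinAt y (A t *ᵥ y t) (Ici t) t) (ha : y a = 0) :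
    ∀ t ∈ Icc a b, y t = 0 := by
  obtain ⟨K, hK⟩ := exists_bound_mulVec_of_continuousOn isCompact_Icc hA
  exact eq_zero_of_abs_deriv_le_mul_abs_self_of_eq_zero_right hy hy' ha
    fun t ht => hK t (Ico_subset_Icc_self ht) (y t)

theorem hasDerivAt_cos_smul_add_sin_smul_mulVec {ι : Type*} [Fintype ι] [DecidableEq ι]
    {C : ℝ → Matrix ι ι ℝ} {s : ℝ} (hC : HasDerivAt C (C s ^ 2 + 1) s) (v : ι → ℝ) (θ : ℝ) :
    HasDerivAt (fun t => Real.cos (t - θ) • v + Real.sin (t - θ) • (C t *ᵥ v))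
      (C s *ᵥ (Real.cos (s - θ) • v + Real.sin (s - θ) • (C s *ᵥ v))) s := by
  have hshift : HasDerivAt (fun t : ℝ => t - θ) 1 s := (hasDerivAt_id s).sub_const θ
  have hcos : HasDerivAt (fun t => Real.cos (t - θ)) (-Real.sin (s - θ)) s := by
    simpa using hshift.cos
  have hsin : HasDerivAt (fun t => Real.sin (t - θ)) (Real.cos (s - θ)) s := by
    simpa using hshift.sin
  have hCv : HasDerivAt (fun t => C t *ᵥ v) ((C s ^ 2 + 1) *ᵥ v) s :=
    ((mulVecCLM_s4 ι ι).flip v).hasFDerivAt.comp_hasDerivAt s hC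
  refine ((hcos.smul_const v).add (hsin.smul hCv)).congr_deriv ?_
  simp only [mulVec_add, mulVec_smul, add_mulVec, one_mulVec, sq, ← mulVec_mulVec, smul_add,
    neg_smul]
  abel

theorem stmt_4_general (n : ℕ) (hodd : Odd n) :
    ¬ ∃ C : ℝ → Matrix (Fin n) (Fin n) ℝ,
        Differentiable ℝ C ∧ ∀ s : ℝ, deriv C s = C s ^ 2 + 1 := by
  rintro ⟨C, hC, hode⟩
  obtain ⟨μ, v, hv, hCv⟩ := (C 0).exists_mulVec_eq_smul_of_odd_card (by rwa [Fintype.card_fin])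
  obtain ⟨θ, hθ, hcot⟩ := Real.exists_pos_cos_eq_mul_sin μ
  set y := fun t => Real.cos (t - θ) • v + Real.sin (t - θ) • (C t *ᵥ v) with hy
  have hy' : ∀ t, HasDerivAt y (C t *ᵥ y t) t := fun t =>
    hasDerivAt_cos_smul_add_sin_smul_mulVec (hode t ▸ (hC t).hasDerivAt) v θ
  have hy0 : y 0 = 0 := by
    simp only [hy, zero_sub, Real.cos_neg, Real.sin_neg, hCv, smul_smul, hcot]
    module
  have hyθ : y θ = 0 :=
    eq_zero_of_hasDerivWithinAt_mulVec hC.continuous.continuousOn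
      (continuous_iff_continuousAt.2 fun t => (hy' t).continuousAt).continuousOn
      (fun t _ => (hy' t).hasDerivWithinAt) hy0 θ ⟨hθ.le, le_rfl⟩
  exact hv (by simpa [hy] using hyθ)

/-- For odd `n ≥ 1`, there is no differentiable map
`C : ℝ → Matrix (Fin n) (Fin n) ℝ` satisfying `C' = C² + 1` on all of `ℝ`. -/
theorem stmt_4 (n : ℕ) (hn : 1 ≤ n) (hodd : Odd n) :
    ¬ ∃ C : ℝ → Matrix (Fin n) (Fin n) ℝ,
        Differentiable ℝ C ∧ ∀ s : ℝ, deriv C s = C s ^ 2 + 1 :=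
  stmt_4_general n hodd
end

section
/- Every two-dimensional ℝ-linear subspace W of the space of 2×2 real matrices contains a nonzero matrix C having a real eigenvalue, i.e., a nonzero C ∈ W with (trace C)² − 4·det C ≥ 0. -/
/-!
Restricting the linear functional `C ↦ C 0 1` to a two-dimensional subspace gives a nonzero
kernel vector. A matrix with `C 0 1 = 0` is triangular, so its discriminant is the square
`(C 0 0 - C 1 1) ^ 2`.
-/

theorem Submodule.exists_mem_ne_zero_apply_eq_zero {K V : Type*} [Field K] [AddCommGroup V]
    [Module K V] (W : Submodule K V) (hW : 1 < Module.finrank K W) (f : V →ₗ[K] K) :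
    ∃ x ∈ W, x ≠ 0 ∧ f x = 0 := by
  have : FiniteDimensional K W := Module.finite_of_finrank_pos (by omega)
  have hker : LinearMap.ker (f ∘ₗ W.subtype) ≠ ⊥ :=
    LinearMap.ker_ne_bot_of_finrank_lt (by rwa [Module.finrank_self])
  obtain ⟨x, hx, hx0⟩ := Submodule.exists_mem_ne_zero_of_ne_bot hker
  exact ⟨x, x.2, by simpa using hx0, hx⟩

theorem Matrix.trace_sq_sub_four_mul_det_of_apply_zero_one_eq_zero {R : Type*} [CommRing R]
    {C : Matrix (Fin 2) (Fin 2) R} (hC : C 0 1 = 0) :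
    C.trace ^ 2 - 4 * C.det = (C 0 0 - C 1 1) ^ 2 := by
  rw [Matrix.trace_fin_two, Matrix.det_fin_two, hC]
  ring

/-- Every two-dimensional subspace of the 2×2 real matrices contains a nonzero
matrix with a real eigenvalue, i.e. with nonnegative discriminant
`(tr C)² − 4 det C ≥ 0`. -/
theorem stmt_5 (W : Submodule ℝ (Matrix (Fin 2) (Fin 2) ℝ))
    (hW : Module.finrank ℝ W = 2) :
    ∃ C ∈ W, C ≠ 0 ∧ (Matrix.trace C) ^ 2 - 4 * Matrix.det C ≥ 0 := by
  obtain ⟨C, hCW, hC0, hC⟩ :=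
    W.exists_mem_ne_zero_apply_eq_zero (by omega) (Matrix.entryLinearMap ℝ ℝ 0 1)
  refine ⟨C, hCW, hC0, ?_⟩
  rw [Matrix.trace_sq_sub_four_mul_det_of_apply_zero_one_eq_zero hC]
  exact sq_nonneg _
end

section
/- Let n ≥ 1 and let φ : EuclideanSpace ℝ (Fin n) → ℝ be a twice continuously differentiable function that is bounded from above. Then for every j ≥ 1 there exists a point x_j with φ(x_j) > sup φ − 1/j, ‖∇φ(x_j)‖ ≤ 1/j, and Δφ(x_j) ≤ 1/j. -/
/-!
Fix `x₀` with `φ x₀ > sup φ - η` and maximize the penalized function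
`φ y - ε ‖y - x₀‖²`, which attains its maximum at some `x` because the penalty is coercive. Then
`φ x ≥ φ x₀`, and the first- and second-order conditions at `x` give `∇φ x = 2ε (x - x₀)` and
`D²φ x (v, v) ≤ 2ε ‖v‖²`. Comparing the values at `x` and `x₀` bounds `ε ‖x - x₀‖²` by `η`,
hence `‖∇φ x‖² ≤ 4εη`, while summing the Hessian bound over an orthonormal basis gives
`Δφ x ≤ 2nε`. Choosing `η = 1/j` and `ε` of order `1/(nj)` yields the claim.
-/

noncomputable def laplacian {n : ℕ} (f : EuclideanSpace ℝ (Fin n) → ℝ)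
    (x : EuclideanSpace ℝ (Fin n)) : ℝ :=
  ∑ i, iteratedFDeriv ℝ 2 f x ![EuclideanSpace.single i 1, EuclideanSpace.single i 1]

open Set Filter Topology

theorem IsLocalMax.deriv_deriv_nonpos {f : ℝ → ℝ} {a : ℝ} (h : IsLocalMax f a)
    (hc : ContinuousAt f a) : deriv (deriv f) a ≤ 0 := by
  by_contra! hpos
  have hmin : IsLocalMin f a := isLocalMin_of_deriv_deriv_pos hpos h.deriv_eq_zero hc
  have hconst : f =ᶠ[𝓝 a] fun _ => f a :=
    (hmin.and h).mono fun y hy => le_antisymm hy.2 hy.1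
  have hderiv : deriv f =ᶠ[𝓝 a] fun _ => 0 :=
    hconst.eventuallyEq_nhds.mono fun y hy => by rw [hy.deriv_eq, deriv_const]
  simp [hderiv.deriv_eq] at hpos

theorem IsLocalMax.iteratedFDeriv_two_apply_self_nonpos {E : Type*} [NormedAddCommGroup E]
    [NormedSpace ℝ E] {f : E → ℝ} {x : E} (h : IsLocalMax f x) (hf : ContDiff ℝ 2 f) (v : E) :
    iteratedFDeriv ℝ 2 f x ![v, v] ≤ 0 := by
  set L : ℝ →L[ℝ] E := (1 : ℝ →L[ℝ] ℝ).smulRight v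
  set g : E → ℝ := fun y => f (x + y)
  have hg : ContDiff ℝ 2 g := hf.comp (contDiff_const.add contDiff_id)
  have hg0 : IsLocalMax g (L 0) := by
    rw [← add_zero x, ← map_zero L] at h
    exact h.comp_continuous (continuous_const_add x).continuousAt
  have key := (hg0.comp_continuous L.continuous.continuousAt).deriv_deriv_nonpos
    (hg.continuous.comp L.continuous).continuousAt
  rw [← iteratedDeriv_one, ← iteratedDeriv_succ', iteratedDeriv_eq_iteratedFDeriv,
    L.iteratedFDeriv_comp_right hg _ le_rfl, iteratedFDeriv_comp_add_left] at key
  have hvv : ![v, v] = fun _ => v := by ext i; fin_cases i <;> rfl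
  simpa [L, hvv] using key

theorem exists_forall_sub_mul_norm_sub_sq_le {E : Type*} [NormedAddCommGroup E] [ProperSpace E]
    {φ : E → ℝ} (hφ : Continuous φ) (hb : BddAbove (range φ)) {ε : ℝ} (hε : 0 < ε) (x₀ : E) :
    ∃ x, ∀ y, φ y - ε * ‖y - x₀‖ ^ 2 ≤ φ x - ε * ‖x - x₀‖ ^ 2 := by
  obtain ⟨S, hS⟩ := hb
  refine Continuous.exists_forall_ge' (by fun_prop) x₀ ?_
  have hpen : Tendsto (fun y => ε * ‖y - x₀‖ ^ 2) (cocompact E) atTop := by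
    simpa only [Function.comp_def, dist_eq_norm] using ((tendsto_pow_atTop two_ne_zero).comp
      (tendsto_dist_right_cocompact_atTop x₀)).const_mul_atTop hε
  filter_upwards [hpen.eventually_ge_atTop (S - φ x₀)] with y hy
  have := hS (mem_range_self y)
  simp only [sub_self, norm_zero]
  linarith

section InnerProductSpace

variable {E : Type*} [NormedAddCommGroup E] [InnerProductSpace ℝ E]

theorem iteratedFDeriv_two_norm_sub_sq_apply (x₀ x v : E) :
    iteratedFDeriv ℝ 2 (fun y => ‖y - x₀‖ ^ 2) x ![v, v] = 2 * ‖v‖ ^ 2 := by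
  rw [iteratedFDeriv_comp_sub (f := fun y : E => ‖y‖ ^ 2), iteratedFDeriv_two_apply,
    fderiv_norm_sq, ← FunLike.coe_smul, ContinuousLinearMap.fderiv]
  simp only [Matrix.cons_val_zero, Matrix.cons_val_one, Matrix.cons_val_fin_one, smul_apply,
    nsmul_eq_mul, Nat.cast_ofNat]
  exact congrArg (2 * ·) (real_inner_self_eq_norm_sq v)

theorem gradient_eq_of_isLocalMax_sub_mul_norm_sub_sq [CompleteSpace E] {φ : E → ℝ} {ε : ℝ}
    {x₀ x : E} (h : IsLocalMax (fun y => φ y - ε * ‖y - x₀‖ ^ 2) x)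
    (hφ : DifferentiableAt ℝ φ x) :
    gradient φ x = (2 * ε) • (x - x₀) := by
  have hq : HasFDerivAt (fun y => ‖y - x₀‖ ^ 2) (2 • innerSL ℝ (x - x₀)) x := by
    simpa using ((hasFDerivAt_id x).sub_const x₀).norm_sq
  have hcrit := h.hasFDerivAt_eq_zero (hφ.hasFDerivAt.sub (hq.const_mul ε))
  rw [sub_eq_zero] at hcrit
  have hdual : InnerProductSpace.toDual ℝ E ((2 * ε) • (x - x₀)) = fderiv ℝ φ x := by
    ext y
    simp only [hcrit, InnerProductSpace.toDual_apply_apply, real_inner_smul_left, smul_apply,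
      coe_innerSL_apply, smul_eq_mul, nsmul_eq_mul, Nat.cast_ofNat]
    ring
  exact (hasGradientAt_iff_hasFDerivAt.mpr (hdual ▸ hφ.hasFDerivAt)).gradient

theorem iteratedFDeriv_two_apply_self_le_of_isLocalMax_sub_mul_norm_sub_sq {φ : E → ℝ}
    {ε : ℝ} {x₀ x : E} (h : IsLocalMax (fun y => φ y - ε * ‖y - x₀‖ ^ 2) x)
    (hφ : ContDiff ℝ 2 φ) (v : E) :
    iteratedFDeriv ℝ 2 φ x ![v, v] ≤ 2 * ε * ‖v‖ ^ 2 := by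
  have hq : ContDiff ℝ 2 fun y : E => ‖y - x₀‖ ^ 2 := (contDiff_id.sub contDiff_const).norm_sq ℝ
  have hpen : ContDiff ℝ 2 fun y : E => ε • ‖y - x₀‖ ^ 2 := hq.const_smul ε
  have key : iteratedFDeriv ℝ 2 (fun y => φ y - ε • ‖y - x₀‖ ^ 2) x ![v, v] ≤ 0 :=
    h.iteratedFDeriv_two_apply_self_nonpos (hφ.sub hpen) v
  rw [fun_iteratedFDeriv_sub_apply hφ.contDiffAt hpen.contDiffAt,
    iteratedFDeriv_const_smul_apply' hq.contDiffAt] at key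
  simp only [sub_apply, smul_apply, iteratedFDeriv_two_norm_sub_sq_apply, smul_eq_mul] at key
  linarith

theorem exists_approx_sSup_gradient_iteratedFDeriv_two_le [ProperSpace E] {φ : E → ℝ}
    (hφ : ContDiff ℝ 2 φ) (hb : BddAbove (range φ)) {ε η : ℝ} (hε : 0 < ε) (hη : 0 < η) :
    ∃ x, sSup (range φ) - η < φ x ∧ ‖gradient φ x‖ ^ 2 ≤ 4 * ε * η ∧
      ∀ v, iteratedFDeriv ℝ 2 φ x ![v, v] ≤ 2 * ε * ‖v‖ ^ 2 := by
  obtain ⟨_, ⟨x₀, rfl⟩, hx₀⟩ := exists_lt_of_lt_csSup (range_nonempty φ) (sub_lt_self _ hη)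
  obtain ⟨x, hx⟩ := exists_forall_sub_mul_norm_sub_sq_le hφ.continuous hb hε x₀
  have hmax : IsLocalMax (fun y => φ y - ε * ‖y - x₀‖ ^ 2) x := Eventually.of_forall hx
  have hsup : φ x ≤ sSup (range φ) := le_csSup hb (mem_range_self x)
  have hcompare : φ x₀ ≤ φ x - ε * ‖x - x₀‖ ^ 2 := by simpa using hx x₀
  have hpen : 0 ≤ ε * ‖x - x₀‖ ^ 2 := by positivity
  refine ⟨x, by linarith, ?_,
    iteratedFDeriv_two_apply_self_le_of_isLocalMax_sub_mul_norm_sub_sq hmax hφ⟩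
  rw [gradient_eq_of_isLocalMax_sub_mul_norm_sub_sq hmax (hφ.differentiable two_ne_zero x),
    norm_smul, Real.norm_of_nonneg (by positivity)]
  calc (2 * ε * ‖x - x₀‖) ^ 2 = 4 * ε * (ε * ‖x - x₀‖ ^ 2) := by ring
    _ ≤ 4 * ε * η := by gcongr; linarith

end InnerProductSpace

theorem laplacian_le_of_iteratedFDeriv_two_apply_self_le {n : ℕ}
    {f : EuclideanSpace ℝ (Fin n) → ℝ} {x : EuclideanSpace ℝ (Fin n)} {c : ℝ}
    (h : ∀ v, iteratedFDeriv ℝ 2 f x ![v, v] ≤ c * ‖v‖ ^ 2) : laplacian f x ≤ n * c :=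
  calc laplacian f x ≤ ∑ _i : Fin n, c := Finset.sum_le_sum fun i _ => by
        simpa [PiLp.norm_single] using h (EuclideanSpace.single i 1)
    _ = n * c := by simp

theorem stmt_8_general (n : ℕ) (φ : EuclideanSpace ℝ (Fin n) → ℝ)
    (hφ : ContDiff ℝ 2 φ) (hb : BddAbove (Set.range φ)) :
    ∀ j : ℕ, 1 ≤ j → ∃ x : EuclideanSpace ℝ (Fin n),
      φ x > sSup (Set.range φ) - 1 / (j : ℝ) ∧
      ‖gradient φ x‖ ≤ 1 / (j : ℝ) ∧ laplacian φ x ≤ 1 / (j : ℝ) := by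
  intro j hj
  set δ : ℝ := 1 / j
  have hδ : 0 < δ := by positivity
  set ε : ℝ := δ / (4 * (n + 1))
  have hε : 0 < ε := by positivity
  have hεδ : 4 * (n + 1) * ε = δ := by simp only [ε]; field_simp
  obtain ⟨x, hval, hgrad, hhess⟩ := exists_approx_sSup_gradient_iteratedFDeriv_two_le hφ hb hε hδ
  refine ⟨x, hval, ?_, ?_⟩
  · rw [← pow_le_pow_iff_left₀ (norm_nonneg _) hδ.le two_ne_zero]
    nlinarith
  · calc laplacian φ x ≤ n * (2 * ε) := laplacian_le_of_iteratedFDeriv_two_apply_self_le hhess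
      _ ≤ δ := by nlinarith

/-- The Omori–Yau maximum principle on Euclidean space: for a `C²` function `φ`
bounded from above there are points almost realizing the supremum at which the
gradient is small and the Laplacian is almost nonpositive. -/
theorem stmt_8 (n : ℕ) (hn : 1 ≤ n) (φ : EuclideanSpace ℝ (Fin n) → ℝ)
    (hφ : ContDiff ℝ 2 φ) (hb : BddAbove (Set.range φ)) :
    ∀ j : ℕ, 1 ≤ j → ∃ x : EuclideanSpace ℝ (Fin n),
      φ x > sSup (Set.range φ) - 1 / (j : ℝ) ∧
      ‖gradient φ x‖ ≤ 1 / (j : ℝ) ∧ laplacian φ x ≤ 1 / (j : ℝ) :=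
  stmt_8_general n φ hφ hb
end

section
/- Let n ≥ 1, let e be a unit vector in EuclideanSpace ℝ (Fin n), and let u, v : EuclideanSpace ℝ (Fin n) → ℝ be twice continuously differentiable functions that are harmonic (Δu = Δv = 0 everywhere), satisfy u(x) ≥ 0 for all x, and whose directional derivatives along e satisfy D_e u(x) = 2 u(x) v(x) and D_e v(x) = (v(x))² − (u(x))² + 1 for all x. Then u is identically 1 and v is identically 0. -/
/-!
Put `φ = (u - 1)² + v²`. Since `u` and `v` are harmonic,
`Δφ = 2 (‖∇u‖² + ‖∇v‖²) ≥ 2 ((D_e u)² + (D_e v)²)`, and with `z = u + i v` the system says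
`(D_e u)² + (D_e v)² = |1 - z²|² = |1 - z|² |1 + z|² = φ (φ + 4u) ≥ φ²`. So `Δφ ≥ 2φ²`, and a
nonnegative function with `Δφ ≥ κφ²` on all of `ℝⁿ` vanishes (Keller–Osserman): at an interior
maximum `y` of `(R² - ‖x - x₀‖²)² φ(x)` on the ball of radius `R` about `x₀`, the second derivative
test along the coordinate lines gives `κ (R² - ‖y - x₀‖²)² φ(y) ≤ (4n + 24) R²`, whence
`κ R² φ(x₀) ≤ 4n + 24` for every `R`.
-/

open Filter Topology Metric

theorem IsLocalMax.iteratedDeriv_two_nonpos {f : ℝ → ℝ} {x : ℝ} (h : IsLocalMax f x)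
    (hc : ContinuousAt f x) : iteratedDeriv 2 f x ≤ 0 := by
  by_contra! hpos
  -- a critical point with positive second derivative is a local minimum, so `f` is locally constant
  have hmin : IsLocalMin f x := isLocalMin_of_deriv_deriv_pos
    (by simpa [iteratedDeriv_succ] using hpos) h.deriv_eq_zero hc
  have hconst : f =ᶠ[𝓝 x] fun _ => f x :=
    (h.and hmin).mono fun y hy => le_antisymm hy.1 hy.2
  simp [hconst.iteratedDeriv_eq, iteratedDeriv_const] at hpos

theorem iteratedDeriv_two_mul {P Φ : ℝ → ℝ} {t : ℝ} (hP : ContDiffAt ℝ 2 P t)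
    (hΦ : ContDiffAt ℝ 2 Φ t) :
    iteratedDeriv 2 (fun s => P s * Φ s) t =
      P t * iteratedDeriv 2 Φ t + 2 * deriv P t * deriv Φ t + iteratedDeriv 2 P t * Φ t := by
  simp [iteratedDeriv_fun_mul hP hΦ, Finset.sum_range_succ, iteratedDeriv_one]

theorem iteratedDeriv_two_sq {F : ℝ → ℝ} {t : ℝ} (hF : ContDiffAt ℝ 2 F t) :
    iteratedDeriv 2 (fun s => F s ^ 2) t = 2 * (deriv F t ^ 2 + F t * iteratedDeriv 2 F t) := by
  simp only [sq, iteratedDeriv_two_mul hF hF]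
  ring

theorem IsLocalMax.sq_mul_iteratedDeriv_two_le {P Φ : ℝ → ℝ} {t : ℝ} (hP : ContDiffAt ℝ 2 P t)
    (hΦ : ContDiffAt ℝ 2 Φ t) (hP0 : 0 ≤ P t) (h : IsLocalMax (fun s => P s * Φ s) t) :
    P t ^ 2 * iteratedDeriv 2 Φ t ≤ (2 * deriv P t ^ 2 - P t * iteratedDeriv 2 P t) * Φ t := by
  have hcrit : deriv P t * Φ t + P t * deriv Φ t = 0 := by
    rw [← deriv_fun_mul (hP.differentiableAt two_ne_zero) (hΦ.differentiableAt two_ne_zero)]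
    exact h.deriv_eq_zero
  have hsecond := h.iteratedDeriv_two_nonpos (hP.continuousAt.mul hΦ.continuousAt)
  rw [iteratedDeriv_two_mul hP hΦ] at hsecond
  linear_combination mul_nonpos_of_nonneg_of_nonpos hP0 hsecond - 2 * deriv P t * hcrit

theorem iteratedDeriv_comp_add_smul {E F : Type*} [NormedAddCommGroup E] [NormedSpace ℝ E]
    [NormedAddCommGroup F] [NormedSpace ℝ F] {f : E → F} {k : ℕ} (hf : ContDiff ℝ k f)
    (x a : E) (t : ℝ) :
    iteratedDeriv k (fun s : ℝ => f (x + s • a)) t =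
      iteratedFDeriv ℝ k f (x + t • a) fun _ => a := by
  have hfx : ContDiff ℝ k fun z => f (x + z) := hf.comp (contDiff_const.add contDiff_id)
  have := (ContinuousLinearMap.toSpanSingleton ℝ a).iteratedFDeriv_comp_right hfx t le_rfl
  rw [iteratedDeriv_eq_iteratedFDeriv]
  simp_all [Function.comp_def, iteratedFDeriv_comp_add_left]

theorem sq_mul_iteratedDeriv_two_le_of_isLocalMax {E : Type*} [NormedAddCommGroup E]
    [InnerProductSpace ℝ E] {φ : E → ℝ} (hφ : ContDiff ℝ 2 φ) {x₀ y a : E} {R : ℝ}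
    (hy : ‖y - x₀‖ < R) (ha : ‖a‖ = 1)
    (hmax : IsLocalMax (fun z => (R ^ 2 - ‖z - x₀‖ ^ 2) ^ 2 * φ z) y) :
    (R ^ 2 - ‖y - x₀‖ ^ 2) ^ 2 * iteratedDeriv 2 (fun t : ℝ => φ (y + t • a)) 0 ≤
      (4 * (R ^ 2 - ‖y - x₀‖ ^ 2) + 24 * inner ℝ (y - x₀) a ^ 2) * φ y := by
  set c := R ^ 2 - ‖y - x₀‖ ^ 2
  set b := inner ℝ (y - x₀) a
  have hc : 0 < c := by
    have := norm_nonneg (y - x₀)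
    simp only [c]; nlinarith
  set q : ℝ → ℝ := fun t => c - 2 * b * t - t ^ 2
  have hq : ∀ t : ℝ, R ^ 2 - ‖y + t • a - x₀‖ ^ 2 = q t := by
    intro t
    rw [add_sub_right_comm, norm_add_sq_real, norm_smul, inner_smul_right, ha]
    simp only [Real.norm_eq_abs, mul_one, sq_abs, q, c, b]
    ring
  have hq' : deriv q = fun t => -(2 * b) - 2 * t := funext fun t =>
    (((hasDerivAt_id t).const_mul (2 * b)).const_sub c |>.sub (hasDerivAt_pow 2 t)).deriv.trans
      (by simp)
  have hq'' : iteratedDeriv 2 q 0 = -2 := by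
    rw [iteratedDeriv_succ, iteratedDeriv_one, hq']
    exact ((((hasDerivAt_id 0).const_mul 2).const_sub (-(2 * b))).deriv).trans (by simp)
  have hline : IsLocalMax (fun t : ℝ => q t ^ 2 * φ (y + t • a)) 0 := by
    rw [← add_zero y, ← zero_smul ℝ a] at hmax
    have := hmax.comp_continuous (g := fun t : ℝ => y + t • a) (by fun_prop)
    simpa [Function.comp_def, hq] using this
  have hqd : ContDiff ℝ 2 q := by simp only [q]; fun_prop
  have hq0 : q 0 = c := by simp [q]
  have hdq0 : deriv q 0 = -(2 * b) := by simp [hq']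
  have key := hline.sq_mul_iteratedDeriv_two_le (hqd.pow 2).contDiffAt (by fun_prop) (sq_nonneg _)
  rw [iteratedDeriv_two_sq hqd.contDiffAt, deriv_fun_pow (hqd.differentiable two_ne_zero 0),
    hq'', hq0, hdq0, zero_smul, add_zero] at key
  refine le_of_mul_le_mul_left ?_ (pow_pos hc 2)
  calc c ^ 2 * (c ^ 2 * iteratedDeriv 2 (fun t : ℝ => φ (y + t • a)) 0)
      = (c ^ 2) ^ 2 * iteratedDeriv 2 (fun t : ℝ => φ (y + t • a)) 0 := by ring
    _ ≤ _ := key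
    _ = c ^ 2 * ((4 * c + 24 * b ^ 2) * φ y) := by ring

section Euclidean

variable {n : ℕ}

local notation "E" => EuclideanSpace ℝ (Fin n)

theorem laplacian_eq_sum_iteratedDeriv {f : E → ℝ} (hf : ContDiff ℝ 2 f) (x : E) :
    laplacian f x =
      ∑ i, iteratedDeriv 2 (fun t : ℝ => f (x + t • EuclideanSpace.single i 1)) 0 := by
  refine Finset.sum_congr rfl fun i _ => ?_
  rw [iteratedDeriv_comp_add_smul hf, zero_smul, add_zero]
  congr 1
  ext j
  fin_cases j <;> rfl

theorem laplacian_add {f g : E → ℝ} (hf : ContDiff ℝ 2 f) (hg : ContDiff ℝ 2 g) (x : E) :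
    laplacian (fun y => f y + g y) x = laplacian f x + laplacian g x := by
  simp [laplacian, fun_iteratedFDeriv_add_apply hf.contDiffAt hg.contDiffAt,
    Finset.sum_add_distrib]

theorem laplacian_sub_const_sq {f : E → ℝ} (hf : ContDiff ℝ 2 f) (c : ℝ) (x : E) :
    laplacian (fun y => (f y - c) ^ 2) x =
      2 * (∑ i, fderiv ℝ f x (EuclideanSpace.single i 1) ^ 2 + (f x - c) * laplacian f x) := by
  rw [laplacian_eq_sum_iteratedDeriv ((hf.sub contDiff_const).pow 2),
    laplacian_eq_sum_iteratedDeriv hf, Finset.mul_sum, ← Finset.sum_add_distrib, Finset.mul_sum]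
  refine Finset.sum_congr rfl fun i _ => ?_
  rw [iteratedDeriv_two_sq (by fun_prop), iteratedDeriv_fun_sub (by fun_prop) contDiffAt_const]
  have hderiv : deriv (fun t : ℝ => f (x + t • EuclideanSpace.single i 1)) 0 =
      fderiv ℝ f x (EuclideanSpace.single i 1) :=
    (hf.differentiable two_ne_zero x).lineDeriv_eq_fderiv
  simp [iteratedDeriv_const, hderiv]

theorem sq_apply_le_sum_sq_apply_single (L : E →L[ℝ] ℝ) {e : E} (he : ‖e‖ = 1) :
    L e ^ 2 ≤ ∑ i, L (EuclideanSpace.single i 1) ^ 2 := by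
  have hLe : L e = ∑ i, e i * L (EuclideanSpace.single i 1) := by
    conv_lhs => rw [← (EuclideanSpace.basisFun (Fin n) ℝ).sum_repr e]
    simp [map_sum]
  have hsq : ∑ i, e i ^ 2 = 1 := by rw [← EuclideanSpace.real_norm_sq_eq, he, one_pow]
  calc L e ^ 2 ≤ (∑ i, e i ^ 2) * ∑ i, L (EuclideanSpace.single i 1) ^ 2 := by
        rw [hLe]; exact Finset.sum_mul_sq_le_sq_mul_sq _ _ _
    _ = _ := by rw [hsq, one_mul]

theorem sq_mul_laplacian_le_of_isLocalMax {φ : E → ℝ} (hφ : ContDiff ℝ 2 φ) {x₀ y : E} {R : ℝ}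
    (hy : ‖y - x₀‖ < R) (hmax : IsLocalMax (fun z => (R ^ 2 - ‖z - x₀‖ ^ 2) ^ 2 * φ z) y) :
    (R ^ 2 - ‖y - x₀‖ ^ 2) ^ 2 * laplacian φ y ≤
      (4 * n * (R ^ 2 - ‖y - x₀‖ ^ 2) + 24 * ‖y - x₀‖ ^ 2) * φ y := by
  rw [laplacian_eq_sum_iteratedDeriv hφ, Finset.mul_sum]
  calc _ ≤ ∑ i : Fin n, (4 * (R ^ 2 - ‖y - x₀‖ ^ 2)
          + 24 * inner ℝ (y - x₀) (EuclideanSpace.single i (1 : ℝ)) ^ 2) * φ y :=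
        Finset.sum_le_sum fun i _ =>
          sq_mul_iteratedDeriv_two_le_of_isLocalMax hφ hy (by simp) hmax
    _ = _ := by
      have hsum : ∑ i, inner ℝ (y - x₀) (EuclideanSpace.single i (1 : ℝ)) ^ 2 = ‖y - x₀‖ ^ 2 := by
        simp [EuclideanSpace.inner_single_right, EuclideanSpace.real_norm_sq_eq]
      rw [← Finset.sum_mul, Finset.sum_add_distrib, Finset.sum_const, Finset.card_univ,
        Fintype.card_fin, nsmul_eq_mul, ← Finset.mul_sum, hsum]
      ring

theorem mul_sq_mul_le_of_mul_sq_le_laplacian {κ : ℝ} (hκ : 0 ≤ κ) {φ : E → ℝ} (hφ : ContDiff ℝ 2 φ)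
    (hφ0 : ∀ x, 0 ≤ φ x) (hΔ : ∀ x, κ * φ x ^ 2 ≤ laplacian φ x) (x₀ : E) {R : ℝ} (hR : 0 < R) :
    κ * R ^ 2 * φ x₀ ≤ 4 * n + 24 := by
  set g : E → ℝ := fun z => (R ^ 2 - ‖z - x₀‖ ^ 2) ^ 2 * φ z
  obtain ⟨y, hyB, hymax⟩ := (isCompact_closedBall x₀ R).exists_isMaxOn
    ⟨x₀, mem_closedBall_self hR.le⟩ (by fun_prop : Continuous g).continuousOn
  have hgy : κ * g y ≤ (4 * n + 24) * R ^ 2 := by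
    rcases (mem_closedBall_iff_norm.mp hyB).eq_or_lt with hyR | hyR
    · have hgy0 : g y = 0 := by simp [g, hyR]
      rw [hgy0, mul_zero]
      positivity
    rcases (hφ0 y).eq_or_lt with hφy | hφy
    · simp only [g, ← hφy, mul_zero]
      positivity
    have key := sq_mul_laplacian_le_of_isLocalMax hφ hyR
      (hymax.isLocalMax (closedBall_mem_nhds_of_mem (mem_ball_iff_norm.mpr hyR)))
    have hd := norm_nonneg (y - x₀)
    have hc : 0 ≤ R ^ 2 - ‖y - x₀‖ ^ 2 := by nlinarith
    refine le_of_mul_le_mul_right ?_ hφy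
    calc κ * g y * φ y = (R ^ 2 - ‖y - x₀‖ ^ 2) ^ 2 * (κ * φ y ^ 2) := by ring
      _ ≤ (R ^ 2 - ‖y - x₀‖ ^ 2) ^ 2 * laplacian φ y := by gcongr; exact hΔ y
      _ ≤ _ := key
      _ ≤ (4 * n + 24) * R ^ 2 * φ y := by gcongr; nlinarith
  have hgx₀ : g x₀ = R ^ 2 * R ^ 2 * φ x₀ := by
    simp only [g, sub_self, norm_zero]; ring
  refine le_of_mul_le_mul_right ?_ (pow_pos hR 2)
  calc κ * R ^ 2 * φ x₀ * R ^ 2 = κ * g x₀ := by rw [hgx₀]; ring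
    _ ≤ κ * g y := by gcongr; exact isMaxOn_iff.mp hymax x₀ (mem_closedBall_self hR.le)
    _ ≤ _ := hgy

theorem eq_zero_of_mul_sq_le_laplacian {κ : ℝ} (hκ : 0 < κ) {φ : E → ℝ} (hφ : ContDiff ℝ 2 φ)
    (hφ0 : ∀ x, 0 ≤ φ x) (hΔ : ∀ x, κ * φ x ^ 2 ≤ laplacian φ x) (x : E) : φ x = 0 := by
  refine le_antisymm ?_ (hφ0 x)
  by_contra! hpos
  have hC : 0 < (4 * n + 25) / (κ * φ x) := by positivity
  have := mul_sq_mul_le_of_mul_sq_le_laplacian hκ.le hφ hφ0 hΔ x (Real.sqrt_pos.mpr hC)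
  rw [Real.sq_sqrt hC.le] at this
  field_simp at this
  linarith

theorem two_mul_sq_le_laplacian_sub_one_sq_add_sq {e : E} (he : ‖e‖ = 1) {u v : E → ℝ}
    (hu : ContDiff ℝ 2 u) (hv : ContDiff ℝ 2 v) {x : E} (hu0 : laplacian u x = 0)
    (hv0 : laplacian v x = 0) (hpos : 0 ≤ u x) (hDu : fderiv ℝ u x e = 2 * u x * v x)
    (hDv : fderiv ℝ v x e = v x ^ 2 - u x ^ 2 + 1) :
    2 * ((u x - 1) ^ 2 + v x ^ 2) ^ 2 ≤ laplacian (fun y => (u y - 1) ^ 2 + v y ^ 2) x := by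
  have hv2 : laplacian (fun y => v y ^ 2) x =
      2 * (∑ i, fderiv ℝ v x (EuclideanSpace.single i 1) ^ 2 + v x * laplacian v x) := by
    simpa using laplacian_sub_const_sq hv 0 x
  rw [laplacian_add (by fun_prop) (by fun_prop), laplacian_sub_const_sq hu, hv2, hu0, hv0]
  have hCSu := sq_apply_le_sum_sq_apply_single (fderiv ℝ u x) he
  have hCSv := sq_apply_le_sum_sq_apply_single (fderiv ℝ v x) he
  rw [hDu] at hCSu
  rw [hDv] at hCSv
  have hfactor : (2 * u x * v x) ^ 2 + (v x ^ 2 - u x ^ 2 + 1) ^ 2 =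
      ((u x - 1) ^ 2 + v x ^ 2) * ((u x - 1) ^ 2 + v x ^ 2 + 4 * u x) := by ring
  nlinarith [mul_nonneg (add_nonneg (sq_nonneg (u x - 1)) (sq_nonneg (v x))) hpos]

end Euclidean

theorem stmt_10_general (n : ℕ) (e : EuclideanSpace ℝ (Fin n)) (he : ‖e‖ = 1)
    (u v : EuclideanSpace ℝ (Fin n) → ℝ)
    (hu : ContDiff ℝ 2 u) (hv : ContDiff ℝ 2 v)
    (hu0 : ∀ x, laplacian u x = 0) (hv0 : ∀ x, laplacian v x = 0)
    (hpos : ∀ x, 0 ≤ u x)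
    (hDu : ∀ x, fderiv ℝ u x e = 2 * u x * v x)
    (hDv : ∀ x, fderiv ℝ v x e = (v x) ^ 2 - (u x) ^ 2 + 1) :
    (∀ x, u x = 1) ∧ (∀ x, v x = 0) := by
  have hφ : ∀ x, (u x - 1) ^ 2 + v x ^ 2 = 0 :=
    eq_zero_of_mul_sq_le_laplacian two_pos (by fun_prop) (fun x => by positivity)
      fun x => two_mul_sq_le_laplacian_sub_one_sq_add_sq he hu hv (hu0 x) (hv0 x) (hpos x)
        (hDu x) (hDv x)
  have hsq x := (add_eq_zero_iff_of_nonneg (sq_nonneg _) (sq_nonneg _)).mp (hφ x)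
  exact ⟨fun x => sub_eq_zero.mp (pow_eq_zero_iff two_ne_zero |>.mp (hsq x).1),
    fun x => pow_eq_zero_iff two_ne_zero |>.mp (hsq x).2⟩

/-- If `u, v` are `C²` harmonic functions on Euclidean space with `u ≥ 0` whose
directional derivatives along a unit vector `e` satisfy `D_e u = 2uv` and
`D_e v = v² − u² + 1`, then `u ≡ 1` and `v ≡ 0`. -/
theorem stmt_10 (n : ℕ) (hn : 1 ≤ n) (e : EuclideanSpace ℝ (Fin n)) (he : ‖e‖ = 1)
    (u v : EuclideanSpace ℝ (Fin n) → ℝ)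
    (hu : ContDiff ℝ 2 u) (hv : ContDiff ℝ 2 v)
    (hu0 : ∀ x, laplacian u x = 0) (hv0 : ∀ x, laplacian v x = 0)
    (hpos : ∀ x, 0 ≤ u x)
    (hDu : ∀ x, fderiv ℝ u x e = 2 * u x * v x)
    (hDv : ∀ x, fderiv ℝ v x e = (v x) ^ 2 - (u x) ^ 2 + 1) :
    (∀ x, u x = 1) ∧ (∀ x, v x = 0) :=
  stmt_10_general n e he u v hu hv hu0 hv0 hpos hDu hDv
end

section
/- Let U ⊆ ℂ be open, let α₁ : U → ℂ^k be complex differentiable on U with α₁(z) ⋅ α₁(z) = 0 for all z ∈ U, let φ₁ : U → ℂ^k be complex differentiable with φ₁'(z) = α₁(z) on U, and let β₂ : U → ℂ be complex differentiable. Set q(z) = φ₁(z) ⋅ φ₁(z) and define α₂ : U → ℂ^(k+2) by α₂ = (β₂(1 − q), i·β₂(1 + q), 2β₂φ₁). Then for every z ∈ U, both α₂(z) ⋅ α₂(z) = 0 and α₂'(z) ⋅ α₂'(z) = 0. -/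
/-!
A vector `(x, I y, v)` of `ℂ^(k+2)` has square `x² - y² + v ⬝ v`. For `α₂` this is
`β₂²((1 - q)² - (1 + q)² + 4q) = 0`. Differentiating, with `q' = 2 φ₁ ⬝ α₁`, the square of `α₂'` is
`-4β₂'(β₂'q + β₂q') + 4(β₂'²q + 2β₂β₂' φ₁ ⬝ α₁ + β₂² α₁ ⬝ α₁)`, which vanishes because `α₁` is null.
-/

open Complex Matrix

theorem HasDerivAt.dotProduct {𝕜 𝔸 ι : Type*} [NontriviallyNormedField 𝕜] [NormedCommRing 𝔸]
    [NormedAlgebra 𝕜 𝔸] [Fintype ι] {f g : 𝕜 → ι → 𝔸} {f' g' : ι → 𝔸} {x : 𝕜}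
    (hf : HasDerivAt f f' x) (hg : HasDerivAt g g' x) :
    HasDerivAt (fun y => f y ⬝ᵥ g y) (f' ⬝ᵥ g x + f x ⬝ᵥ g') x := by
  simp only [_root_.dotProduct, ← Finset.sum_add_distrib]
  exact HasDerivAt.fun_sum fun i _ => (hasDerivAt_pi.mp hf i).mul (hasDerivAt_pi.mp hg i)

theorem dotProduct_self_cons_cons_I_mul {k : ℕ} (x y : ℂ) (v : Fin k → ℂ) :
    (Fin.cons x (Fin.cons (I * y) v) : Fin (k + 2) → ℂ) ⬝ᵥ Fin.cons x (Fin.cons (I * y) v)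
      = x ^ 2 - y ^ 2 + v ⬝ᵥ v := by
  change vecCons x (vecCons (I * y) v) ⬝ᵥ vecCons x (vecCons (I * y) v) = _
  simp only [cons_dotProduct_cons]
  linear_combination y ^ 2 * I_sq

theorem stmt_12_general (k : ℕ) (U : Set ℂ) (hU : IsOpen U)
    (α₁ : ℂ → Fin k → ℂ)
    (hnull : ∀ z ∈ U, (∑ j, α₁ z j * α₁ z j) = 0)
    (φ₁ : ℂ → Fin k → ℂ) (hφ₁ : ∀ z ∈ U, HasDerivAt φ₁ (α₁ z) z)
    (β₂ : ℂ → ℂ) (hβ₂ : DifferentiableOn ℂ β₂ U)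
    (q : ℂ → ℂ) (hq : ∀ z, q z = ∑ j, φ₁ z j * φ₁ z j)
    (α₂ : ℂ → Fin (k + 2) → ℂ)
    (hα₂ : ∀ z, α₂ z = Fin.cons (β₂ z * (1 - q z))
        (Fin.cons (I * (β₂ z * (1 + q z))) (fun j => 2 * β₂ z * φ₁ z j))) :
    ∀ z ∈ U, (∑ j, α₂ z j * α₂ z j) = 0 ∧
      (∑ j, deriv α₂ z j * deriv α₂ z j) = 0 := by
  have hq : q = fun z => φ₁ z ⬝ᵥ φ₁ z := funext hq
  have hα₂ : α₂ = fun z => Fin.cons (β₂ z * (1 - q z))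
      (Fin.cons (I * (β₂ z * (1 + q z))) ((2 * β₂ z) • φ₁ z)) := funext hα₂
  intro z hz
  have hβ : HasDerivAt β₂ (deriv β₂ z) z := (hβ₂.differentiableAt (hU.mem_nhds hz)).hasDerivAt
  have hφ := hφ₁ z hz
  have hq' : HasDerivAt q (2 * (φ₁ z ⬝ᵥ α₁ z)) z := by
    rw [hq, two_mul]
    simpa only [dotProduct_comm (α₁ z)] using hφ.dotProduct hφ
  have hα₂' : HasDerivAt α₂ (Fin.cons (deriv β₂ z * (1 - q z) + β₂ z * (0 - 2 * (φ₁ z ⬝ᵥ α₁ z)))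
      (Fin.cons (I * (deriv β₂ z * (1 + q z) + β₂ z * (0 + 2 * (φ₁ z ⬝ᵥ α₁ z))))
        ((2 * β₂ z) • α₁ z + (2 * deriv β₂ z) • φ₁ z))) z := by
    rw [hα₂]
    exact (hβ.fun_mul ((hasDerivAt_const z 1).fun_sub hq')).finCons (F' := fun _ => ℂ)
      (((hβ.fun_mul ((hasDerivAt_const z 1).fun_add hq')).const_mul I).finCons (F' := fun _ => ℂ)
        ((hβ.const_mul 2).fun_smul hφ))
  have hα := hnull z hz
  change α₁ z ⬝ᵥ α₁ z = 0 at hα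
  change (_ ⬝ᵥ _) = 0 ∧ (_ ⬝ᵥ _) = 0
  rw [hα₂'.deriv, hα₂, dotProduct_self_cons_cons_I_mul, dotProduct_self_cons_cons_I_mul, hq]
  simp only [smul_dotProduct, dotProduct_smul, add_dotProduct, dotProduct_add, smul_eq_mul,
    dotProduct_comm (α₁ z) (φ₁ z), hα]
  constructor
  · ring
  · ring

/-- The second-order isotropy step of the Weierstrass representation: if `α₁`
is holomorphic and null (`α₁ ⋅ α₁ = 0`) on an open set `U`, `φ₁' = α₁`, `β₂` is
holomorphic, `q = φ₁ ⋅ φ₁` and `α₂ = (β₂(1 − q), iβ₂(1 + q), 2β₂φ₁)`, then both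
`α₂ ⋅ α₂ = 0` and `α₂' ⋅ α₂' = 0` on `U` (dot products complex-bilinear). -/
theorem stmt_12 (k : ℕ) (U : Set ℂ) (hU : IsOpen U)
    (α₁ : ℂ → Fin k → ℂ) (hα₁ : DifferentiableOn ℂ α₁ U)
    (hnull : ∀ z ∈ U, (∑ j, α₁ z j * α₁ z j) = 0)
    (φ₁ : ℂ → Fin k → ℂ) (hφ₁ : ∀ z ∈ U, HasDerivAt φ₁ (α₁ z) z)
    (β₂ : ℂ → ℂ) (hβ₂ : DifferentiableOn ℂ β₂ U)
    (q : ℂ → ℂ) (hq : ∀ z, q z = ∑ j, φ₁ z j * φ₁ z j)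
    (α₂ : ℂ → Fin (k + 2) → ℂ)
    (hα₂ : ∀ z, α₂ z = Fin.cons (β₂ z * (1 - q z))
        (Fin.cons (I * (β₂ z * (1 + q z))) (fun j => 2 * β₂ z * φ₁ z j))) :
    ∀ z ∈ U, (∑ j, α₂ z j * α₂ z j) = 0 ∧
      (∑ j, deriv α₂ z j * deriv α₂ z j) = 0 :=
  stmt_12_general k U hU α₁ hnull φ₁ hφ₁ β₂ hβ₂ q hq α₂ hα₂
end

section
/- Let U ⊆ ℂ be open and let G : U → ℂ^n be complex differentiable on U with G'(z) ⋅ G'(z) = ∑_j (G_j'(z))² = 0 for all z ∈ U. Define g : U → ℝ^n by g(z) = (Re G_1(z), …, Re G_n(z)). Then for every z ∈ U the two partial derivatives ∂ₓg(z) (the derivative of g at z in the real direction 1) and ∂ᵧg(z) (the derivative of g at z in the direction i) are orthogonal in ℝ^n and have equal Euclidean norms; moreover each component g_j is harmonic on U (its Laplacian, as a function on ℂ regarded as a two-dimensional real inner product space, vanishes on U). -/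
/-!
With `d = G'(z)`, the real chain rule gives `∂ₓg = Re d` and `∂ᵧg = Re (i d) = -Im d`, while
`∑ dⱼ² = (‖Re d‖² - ‖Im d‖²) + 2i ⟪Re d, Im d⟫`; so the null condition is exactly the
conformality of `g` at `z`. Each `gⱼ` is the real part of a holomorphic function, hence
harmonic, and `laplacianC` is the Laplacian computed in the orthonormal basis `{1, i}`.
-/

open Complex

/-- The Laplacian of a real-valued function on `ℂ ≅ ℝ²`: the trace of its
second derivative with respect to the orthonormal basis `{1, i}`. -/
noncomputable def laplacianC (f : ℂ → ℝ) (z : ℂ) : ℝ :=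
  iteratedFDeriv ℝ 2 f z ![1, 1] + iteratedFDeriv ℝ 2 f z ![Complex.I, Complex.I]

open Laplacian InnerProductSpace in
theorem laplacianC_eq_laplacian (f : ℂ → ℝ) : laplacianC f = Δ f := by
  rw [laplacian_eq_iteratedFDeriv_complexPlane]
  rfl

theorem AnalyticAt.laplacianC_re_eq_zero {F : ℂ → ℂ} {z : ℂ} (h : AnalyticAt ℂ F z) :
    laplacianC (fun w => (F w).re) z = 0 := by
  rw [laplacianC_eq_laplacian]
  exact h.harmonicAt_re.2.self_of_nhds

theorem HasDerivAt.hasFDerivAt_re {F : ℂ → ℂ} {c z : ℂ} (h : HasDerivAt F c z) :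
    HasFDerivAt (fun w => (F w).re) (reCLM ∘L (c • 1 : ℂ →L[ℝ] ℂ)) z :=
  reCLM.hasFDerivAt.comp z h.complexToReal_fderiv

theorem HasDerivAt.fderiv_re_apply {F : ℂ → ℂ} {c z : ℂ} (h : HasDerivAt F c z) (v : ℂ) :
    fderiv ℝ (fun w => (F w).re) z v = (c * v).re := by
  rw [h.hasFDerivAt_re.fderiv]
  simp

theorem fderiv_piLp_apply {𝕜 ι H : Type*} {E : ι → Type*} [NontriviallyNormedField 𝕜]
    [NormedAddCommGroup H] [NormedSpace 𝕜 H] [∀ i, NormedAddCommGroup (E i)]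
    [∀ i, NormedSpace 𝕜 (E i)] [Fintype ι] {p : ENNReal} [Fact (1 ≤ p)]
    {f : H → PiLp p E} {y : H} (hf : DifferentiableAt 𝕜 f y) (v : H) (i : ι) :
    fderiv 𝕜 f y v i = fderiv 𝕜 (fun x => f x i) y v := by
  have h := (PiLp.hasFDerivAt_apply (𝕜 := 𝕜) p (f y) i).comp y hf.hasFDerivAt
  exact (DFunLike.congr_fun h.fderiv v).symm

theorem EuclideanSpace.sum_mul_self_eq_zero_iff {ι : Type*} [Fintype ι] (d : ι → ℂ) :
    ∑ j, d j * d j = 0 ↔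
      inner ℝ (WithLp.toLp 2 fun j => (d j).re) (WithLp.toLp 2 fun j => (d j).im) = 0 ∧
      ‖WithLp.toLp 2 fun j => (d j).re‖ = ‖WithLp.toLp 2 fun j => (d j).im‖ := by
  set a : EuclideanSpace ℝ ι := WithLp.toLp 2 fun j => (d j).re
  set b : EuclideanSpace ℝ ι := WithLp.toLp 2 fun j => (d j).im
  have hre : (∑ j, d j * d j).re = ‖a‖ ^ 2 - ‖b‖ ^ 2 := by
    rw [EuclideanSpace.norm_sq_eq, EuclideanSpace.norm_sq_eq]
    simp only [a, b, Real.norm_eq_abs, Complex.re_sum, Complex.mul_re,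
      Finset.sum_sub_distrib, sq, abs_mul_abs_self]
  have him : (∑ j, d j * d j).im = 2 * inner ℝ a b := by
    simp only [a, b, PiLp.inner_apply, RCLike.inner_apply, conj_trivial, Complex.im_sum,
      Complex.mul_im, Finset.mul_sum]
    exact Finset.sum_congr rfl fun j _ => by ring
  rw [Complex.ext_iff, hre, him, ← sq_eq_sq₀ (norm_nonneg a) (norm_nonneg b)]
  simp only [Complex.zero_re, Complex.zero_im, sub_eq_zero, mul_eq_zero, two_ne_zero, false_or]
  exact and_comm

/-- The real part of a null holomorphic curve `G : U → ℂⁿ` (i.e. with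
`G' ⋅ G' = 0` for the complex-bilinear dot product) is a conformal harmonic
map: its partial derivatives `∂ₓg` and `∂ᵧg` are orthogonal of equal norm,
and each component of `g` is harmonic. -/
theorem stmt_13 (n : ℕ) (U : Set ℂ) (hU : IsOpen U)
    (G : ℂ → Fin n → ℂ) (hG : DifferentiableOn ℂ G U)
    (hnull : ∀ z ∈ U, (∑ j, deriv G z j * deriv G z j) = 0)
    (g : ℂ → EuclideanSpace ℝ (Fin n)) (hg : ∀ z j, g z j = (G z j).re) :
    ∀ z ∈ U,
      (inner ℝ (fderiv ℝ g z 1) (fderiv ℝ g z Complex.I) : ℝ) = 0 ∧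
      ‖fderiv ℝ g z 1‖ = ‖fderiv ℝ g z Complex.I‖ ∧
      ∀ j, laplacianC (fun w => g w j) z = 0 := by
  intro z hz
  have hgj : ∀ j, (fun w => g w j) = fun w => (G w j).re := fun j => funext (hg · j)
  have hanalytic : ∀ j, AnalyticAt ℂ (fun w => G w j) z := fun j =>
    (differentiableOn_pi.mp hG j).analyticAt (hU.mem_nhds hz)
  have hderiv : ∀ j, HasDerivAt (fun w => G w j) (deriv G z j) z :=
    hasDerivAt_pi.mp ((hG.differentiableAt (hU.mem_nhds hz)).hasDerivAt)
  have hdiff : DifferentiableAt ℝ g z := (differentiableAt_piLp 2).mpr fun j => by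
    rw [hgj]
    exact (hderiv j).hasFDerivAt_re.differentiableAt
  have hdg : ∀ v j, fderiv ℝ g z v j = (deriv G z j * v).re := fun v j => by
    rw [fderiv_piLp_apply hdiff, hgj, (hderiv j).fderiv_re_apply]
  have h1 : fderiv ℝ g z 1 = WithLp.toLp 2 fun j => (deriv G z j).re := by
    ext j; simp [hdg]
  have hI : fderiv ℝ g z I = -WithLp.toLp 2 fun j => (deriv G z j).im := by
    ext j; simp [hdg]
  obtain ⟨horth, hnorm⟩ := (EuclideanSpace.sum_mul_self_eq_zero_iff _).mp (hnull z hz)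
  refine ⟨by rw [h1, hI, inner_neg_right, horth, neg_zero], by rw [h1, hI, norm_neg, hnorm],
    fun j => ?_⟩
  rw [hgj]
  exact (hanalytic j).laplacianC_re_eq_zero
end
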